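/- Let 0 ≤ s < d, let φ satisfy the truncation-scheme hypotheses including the decay φ(x) ≤ C_γ⟨x⟩^{-γ} for some γ > d, and let d/(d−s) < p ≤ ∞. Then there is C = C(d,s,p,φ,γ) such that for all η > 0 and all μ ∈ L¹∩L^p(ℝ^d) with μ ≥ 0: ‖f_η ∗ μ‖_{L^∞} ≤ C ‖μ‖_{L^p} η^{d(p−1)/p − s}. -/

import Mathlib

/-!
Since `ψ(r) ≤ C_γ min(1, r^{-γ})`, integrating in `t` gives, for every `β ∈ (s, γ]`,
`f_η(x) ≤ C η^{-s} (‖x‖/η)^{-β}`; taking `β` slightly above `s` near the origin and `β = γ` away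
from it, `f_η(x) ≤ C η^{-s} H(x/η)` with `H(w) = min(‖w‖^{-β}, ‖w‖^{-γ})`. If `q` is the exponent
conjugate to `p`, then `p > d/(d-s)` means `s q < d`, so `β` can be chosen with `β q < d < γ q`,
which makes `H ∈ L^q`. Hölder's inequality then bounds `|f_η ∗ μ|` by
`‖f_η‖_q ‖μ‖_p = C η^{-s} η^{d/q} ‖H‖_q ‖μ‖_p`, and `d/q = d(1 - 1/p)`.
-/

open MeasureTheory Set
open scoped ENNReal
open Module (finrank)

theorem ENNReal.HolderConjugate.one_div_toReal_eq {p q : ℝ≥0∞} [p.HolderConjugate q] :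
    1 / q.toReal = 1 - 1 / p.toReal := by
  rw [one_div, one_div]
  have h := congrArg ENNReal.toReal (HolderConjugate.inv_add_inv_eq_one p q)
  rw [ENNReal.toReal_add (ENNReal.inv_ne_top.mpr (HolderConjugate.ne_zero p q))
    (ENNReal.inv_ne_top.mpr (HolderConjugate.ne_zero q p)), ENNReal.toReal_one,
    ENNReal.toReal_inv, ENNReal.toReal_inv] at h
  linarith

theorem enorm_integral_mul_le {α : Type*} [MeasurableSpace α] {μ : Measure α} {p q : ℝ≥0∞}
    [p.HolderConjugate q] {f g : α → ℝ} (hf : AEStronglyMeasurable f μ)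
    (hg : AEStronglyMeasurable g μ) :
    ‖∫ x, f x * g x ∂μ‖ₑ ≤ eLpNorm f p μ * eLpNorm g q μ := by
  calc ‖∫ x, f x * g x ∂μ‖ₑ ≤ eLpNorm (fun x ↦ f x * g x) 1 μ :=
        (enorm_integral_le_lintegral_enorm _).trans_eq eLpNorm_one_eq_lintegral_enorm.symm
    _ ≤ _ := by
        simpa using eLpNorm_le_eLpNorm_mul_eLpNorm'_of_norm hf hg (· * ·) 1
          (ae_of_all _ fun x ↦ by simp [norm_mul])

section RadialProfile

variable {E : Type*} [NormedAddCommGroup E] [NormedSpace ℝ E] [FiniteDimensional ℝ E]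
  [MeasurableSpace E] [BorelSpace E] (μ : Measure E) [μ.IsAddHaarMeasure]

theorem integrable_min_norm_rpow_neg [Nontrivial E] {a b : ℝ} (ha : a < finrank ℝ E)
    (hb : finrank ℝ E < b) : Integrable (fun w : E ↦ min (‖w‖ ^ (-a)) (‖w‖ ^ (-b))) μ := by
  have hn : ((finrank ℝ E - 1 : ℕ) : ℝ) = finrank ℝ E - 1 := by
    rw [Nat.cast_sub Module.finrank_pos, Nat.cast_one]
  have hpow (e y : ℝ) (hy : 0 < y) :
      y ^ (finrank ℝ E - 1) * y ^ (-e) = y ^ ((finrank ℝ E : ℝ) - 1 - e) := by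
    rw [← Real.rpow_natCast, hn, ← Real.rpow_add hy, sub_eq_add_neg _ e]
  have hmeas : Measurable fun y : ℝ ↦ y ^ (finrank ℝ E - 1) • min (y ^ (-a)) (y ^ (-b)) := by
    fun_prop
  rw [integrable_fun_norm_addHaar μ (f := fun r ↦ min (r ^ (-a)) (r ^ (-b))),
    ← Ioc_union_Ioi_eq_Ioi zero_le_one]
  refine IntegrableOn.union ?_ ?_
  · have hint : IntegrableOn (fun y : ℝ ↦ y ^ ((finrank ℝ E : ℝ) - 1 - a)) (Ioc 0 1) :=
      (intervalIntegrable_iff_integrableOn_Ioc_of_le zero_le_one).mp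
        (intervalIntegral.intervalIntegrable_rpow' (by linarith))
    refine hint.mono' hmeas.aestronglyMeasurable ((ae_restrict_iff' measurableSet_Ioc).mpr
      (ae_of_all _ fun y ⟨hy0, _⟩ ↦ ?_))
    rw [smul_eq_mul, Real.norm_of_nonneg (by positivity), ← hpow a y hy0]
    gcongr
    exact min_le_left _ _
  · have hint : IntegrableOn (fun y : ℝ ↦ y ^ ((finrank ℝ E : ℝ) - 1 - b)) (Ioi 1) :=
      integrableOn_Ioi_rpow_of_lt (by linarith) zero_lt_one
    refine hint.mono' hmeas.aestronglyMeasurable ((ae_restrict_iff' measurableSet_Ioi).mpr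
      (ae_of_all _ fun y (hy : 1 < y) ↦ ?_))
    have hy0 : 0 < y := zero_lt_one.trans hy
    rw [smul_eq_mul, Real.norm_of_nonneg (by positivity), ← hpow b y hy0]
    gcongr
    exact min_le_right _ _

theorem memLp_min_norm_rpow_neg [Nontrivial E] {q : ℝ≥0∞} (hq0 : q ≠ 0) (hq : q ≠ ∞)
    {β₁ β₂ : ℝ} (hβ₁ : β₁ * q.toReal < finrank ℝ E) (hβ₂ : finrank ℝ E < β₂ * q.toReal) :
    MemLp (fun w : E ↦ min (‖w‖ ^ (-β₁)) (‖w‖ ^ (-β₂))) q μ := by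
  have hmeas : AEStronglyMeasurable (fun w : E ↦ min (‖w‖ ^ (-β₁)) (‖w‖ ^ (-β₂))) μ :=
    (by fun_prop : Measurable _).aestronglyMeasurable
  have hq' : 0 ≤ q.toReal := ENNReal.toReal_nonneg
  rw [← integrable_norm_rpow_iff hmeas hq0 hq]
  refine (integrable_min_norm_rpow_neg μ hβ₁ hβ₂).mono' (by fun_prop)
    (ae_of_all _ fun w ↦ ?_)
  rw [Real.norm_of_nonneg (by positivity), Real.norm_of_nonneg (by positivity), ← neg_mul,
    ← neg_mul, Real.rpow_mul (norm_nonneg w), Real.rpow_mul (norm_nonneg w)]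
  exact le_min (by gcongr; exact min_le_left _ _) (by gcongr; exact min_le_right _ _)

theorem eLpNorm_comp_inv_smul {F : Type*} [NormedAddCommGroup F] {f : E → F}
    (hf : AEStronglyMeasurable f μ) {R : ℝ} (hR : 0 < R) {q : ℝ≥0∞} (hq : q ≠ ∞) :
    eLpNorm (fun w ↦ f (R⁻¹ • w)) q μ =
      ENNReal.ofReal (R ^ (finrank ℝ E / q.toReal)) * eLpNorm f q μ := by
  have hmap := Measure.map_addHaar_smul μ (inv_ne_zero hR.ne')
  rw [inv_pow, inv_inv, abs_of_pos (by positivity)] at hmap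
  rw [← Function.comp_def, ← eLpNorm_map_measure (by rw [hmap]; exact hf.smul_measure _)
    (measurable_const_smul _).aemeasurable, hmap, eLpNorm_smul_measure_of_ne_top hq, smul_eq_mul,
    ENNReal.ofReal_rpow_of_nonneg (by positivity) (by positivity), ← Real.rpow_natCast,
    ← Real.rpow_mul hR.le, one_div, ENNReal.toReal_inv, div_eq_mul_inv]

theorem abs_integral_mul_le_of_abs_le_dilation {p q : ℝ≥0∞} [q.HolderConjugate p] (hq : q ≠ ∞)
    {H : E → ℝ} (hH : MemLp H q μ) {F g : E → ℝ} (hF : AEStronglyMeasurable F μ)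
    (hg : MemLp g p μ) {B R : ℝ} (hB : 0 ≤ B) (hR : 0 < R) (x : E)
    (hFH : ∀ᵐ y ∂μ, |F y| ≤ B * H (R⁻¹ • (x - y))) :
    |∫ y, F y * g y ∂μ| ≤
      B * R ^ (finrank ℝ E / q.toReal) * (eLpNorm H q μ).toReal * (eLpNorm g p μ).toReal := by
  have hHR : AEStronglyMeasurable (fun w ↦ H (R⁻¹ • w)) μ :=
    hH.1.comp_quasiMeasurePreserving (Measure.quasiMeasurePreserving_smul μ (inv_ne_zero hR.ne'))
  have hF_le : eLpNorm F q μ ≤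
      ENNReal.ofReal (B * R ^ (finrank ℝ E / q.toReal)) * eLpNorm H q μ := by
    calc eLpNorm F q μ ≤ eLpNorm (B • fun y ↦ H (R⁻¹ • (x - y))) q μ :=
          eLpNorm_mono_ae_real hFH
      _ = ENNReal.ofReal B * eLpNorm (fun w ↦ H (R⁻¹ • w)) q μ := by
          rw [eLpNorm_const_smul, Real.enorm_of_nonneg hB,
            ← eLpNorm_comp_measurePreserving hHR (Measure.measurePreserving_sub_left μ x)]
          rfl
      _ = _ := by
          rw [eLpNorm_comp_inv_smul μ hH.1 hR hq, ← mul_assoc, ENNReal.ofReal_mul hB]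
  have hHolder := (enorm_integral_mul_le (p := q) (q := p) hF hg.1).trans (mul_le_mul_left hF_le _)
  rw [← Real.norm_eq_abs, ← toReal_enorm]
  refine (ENNReal.toReal_mono ?_ hHolder).trans_eq ?_
  · exact ENNReal.mul_ne_top (ENNReal.mul_ne_top ENNReal.ofReal_ne_top hH.eLpNorm_ne_top)
      hg.eLpNorm_ne_top
  · rw [ENNReal.toReal_mul, ENNReal.toReal_mul, ENNReal.toReal_ofReal (by positivity)]

end RadialProfile

theorem Real.one_add_sq_rpow_neg_le_rpow_neg {β γ r : ℝ} (hβ : 0 ≤ β) (hβγ : β ≤ γ)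
    (hr : 0 < r) : (1 + r ^ 2) ^ (-γ / 2) ≤ r ^ (-β) := by
  rcases le_total r 1 with hr1 | hr1
  · calc (1 + r ^ 2) ^ (-γ / 2) ≤ 1 :=
          Real.rpow_le_one_of_one_le_of_nonpos (by nlinarith) (by linarith)
      _ ≤ r ^ (-β) := Real.one_le_rpow_of_pos_of_le_one_of_nonpos hr hr1 (by linarith)
  · calc (1 + r ^ 2) ^ (-γ / 2) ≤ (r ^ 2) ^ (-γ / 2) :=
          Real.rpow_le_rpow_of_nonpos (by positivity) (by linarith) (by linarith)
      _ = r ^ (-γ) := by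
          rw [← Real.rpow_natCast, ← Real.rpow_mul hr.le]
          ring_nf
      _ ≤ r ^ (-β) := Real.rpow_le_rpow_of_exponent_le hr1 (by linarith)

/-- `c * smallScalePart d s ψ η ‖x‖` is the small-scale part `f_η(x) = c ∫₀^η t^{d-s} φ_t(x) dt/t`
of the truncated Riesz potential, where `φ_t(x) = t^{-d} ψ(‖x‖/t)`. -/
noncomputable def smallScalePart (d s : ℝ) (ψ : ℝ → ℝ) (η r : ℝ) : ℝ :=
  ∫ t in Ioc 0 η, t ^ (d - s) * (t ^ (-d) * ψ (r / t)) / t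

section SmallScalePart

variable {d s : ℝ} {ψ : ℝ → ℝ} {η : ℝ}

theorem measurable_smallScalePart (hψ : Measurable ψ) : Measurable (smallScalePart d s ψ η) :=
  (StronglyMeasurable.integral_prod_right (by fun_prop)).measurable

theorem smallScalePart_nonneg (hψ0 : ∀ r, 0 ≤ ψ r) (r : ℝ) : 0 ≤ smallScalePart d s ψ η r :=
  setIntegral_nonneg measurableSet_Ioc fun t ht ↦ by
    have := hψ0 (r / t)
    have := ht.1
    positivity

theorem smallScalePart_le {K β r : ℝ} (hψ0 : ∀ r, 0 ≤ ψ r)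
    (hψ : ∀ r, 0 < r → ψ r ≤ K * r ^ (-β)) (hsβ : s < β) (hη : 0 < η) (hr : 0 < r) :
    smallScalePart d s ψ η r ≤ K / (β - s) * η ^ (-s) * (r / η) ^ (-β) := by
  have hint : IntegrableOn (fun t : ℝ ↦ K * r ^ (-β) * t ^ (β - s - 1)) (Ioc 0 η) :=
    ((intervalIntegrable_iff_integrableOn_Ioc_of_le hη.le).mp
      (intervalIntegral.intervalIntegrable_rpow' (by linarith))).const_mul _
  have hpoint : ∀ t ∈ Ioc 0 η,
      t ^ (d - s) * (t ^ (-d) * ψ (r / t)) / t ≤ K * r ^ (-β) * t ^ (β - s - 1) := by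
    rintro t ⟨ht, -⟩
    have hscale : t ^ (d - s) * t ^ (-d) / t * (r / t) ^ (-β) = r ^ (-β) * t ^ (β - s - 1) := by
      rw [Real.div_rpow hr.le ht.le, Real.rpow_neg ht.le β, Real.rpow_sub ht, Real.rpow_sub ht,
        Real.rpow_sub ht, Real.rpow_neg ht.le, Real.rpow_one]
      field_simp
    calc t ^ (d - s) * (t ^ (-d) * ψ (r / t)) / t = t ^ (d - s) * t ^ (-d) / t * ψ (r / t) := by
          ring
      _ ≤ t ^ (d - s) * t ^ (-d) / t * (K * (r / t) ^ (-β)) := by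
          gcongr
          exact hψ _ (div_pos hr ht)
      _ = K * r ^ (-β) * t ^ (β - s - 1) := by
          rw [mul_left_comm, hscale, mul_assoc]
  have hval : ∫ t in Ioc 0 η, K * r ^ (-β) * t ^ (β - s - 1) =
      K * r ^ (-β) * (η ^ (β - s) / (β - s)) := by
    rw [integral_const_mul, ← intervalIntegral.integral_of_le hη.le,
      integral_rpow (Or.inl (by linarith)), sub_add_cancel,
      Real.zero_rpow (by linarith), sub_zero]
  calc smallScalePart d s ψ η r ≤ K * r ^ (-β) * (η ^ (β - s) / (β - s)) :=
        hval ▸ integral_mono_of_nonneg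
          ((ae_restrict_iff' measurableSet_Ioc).mpr (ae_of_all _ fun t ⟨ht, _⟩ ↦ by
            have := hψ0 (r / t)
            positivity))
          hint ((ae_restrict_iff' measurableSet_Ioc).mpr (ae_of_all _ hpoint))
    _ = K / (β - s) * η ^ (-s) * (r / η) ^ (-β) := by
        rw [Real.div_rpow hr.le hη.le, Real.rpow_neg hη.le β, Real.rpow_sub hη, Real.rpow_neg hη.le]
        field_simp

theorem smallScalePart_le_min {K β γ r : ℝ} (hψ0 : ∀ r, 0 ≤ ψ r)
    (hdecay : ∀ r, 0 ≤ r → ψ r ≤ K * (1 + r ^ 2) ^ (-γ / 2)) (hK : 0 ≤ K) (hs : 0 ≤ s)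
    (hsβ : s < β) (hβγ : β ≤ γ) (hη : 0 < η) (hr : 0 < r) :
    smallScalePart d s ψ η r ≤ K / (β - s) * η ^ (-s) * min ((r / η) ^ (-β)) ((r / η) ^ (-γ)) := by
  have hψ (β' : ℝ) (hβ' : 0 ≤ β') (hβ'γ : β' ≤ γ) (r : ℝ) (hr : 0 < r) : ψ r ≤ K * r ^ (-β') :=
    (hdecay r hr.le).trans (by gcongr; exact Real.one_add_sq_rpow_neg_le_rpow_neg hβ' hβ'γ hr)
  have hβ := smallScalePart_le (d := d) hψ0 (hψ β (hs.trans hsβ.le) hβγ) hsβ hη hr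
  have hγ := smallScalePart_le (d := d) hψ0 (hψ γ (hs.trans (hsβ.trans_le hβγ).le) le_rfl)
    (hsβ.trans_le hβγ) hη hr
  have hK' : K / (γ - s) ≤ K / (β - s) := div_le_div_of_nonneg_left hK (by linarith) (by linarith)
  rw [mul_min_of_nonneg _ _ (by positivity)]
  exact le_min hβ (hγ.trans (by gcongr))

end SmallScalePart

theorem abs_integral_smallScalePart_mul_le {E : Type*} [NormedAddCommGroup E]
    [NormedSpace ℝ E] [FiniteDimensional ℝ E] [MeasurableSpace E] [BorelSpace E] [Nontrivial E]
    (ν : Measure E) [ν.IsAddHaarMeasure] {p q : ℝ≥0∞} [q.HolderConjugate p] (hq : q ≠ ∞)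
    {s γ K : ℝ} {ψ : ℝ → ℝ} (hs : 0 ≤ s) (hsq : s < finrank ℝ E / q.toReal)
    (hγ : finrank ℝ E < γ) (hψ0 : ∀ r, 0 ≤ ψ r) (hψ : Measurable ψ)
    (hdecay : ∀ r, 0 ≤ r → ψ r ≤ K * (1 + r ^ 2) ^ (-γ / 2)) (d c : ℝ) :
    ∃ C, 0 ≤ C ∧ ∀ η, 0 < η → ∀ μ : E → ℝ, MemLp μ p ν → ∀ x,
      |∫ y, c * smallScalePart d s ψ η ‖x - y‖ * μ y ∂ν| ≤
        C * (eLpNorm μ p ν).toReal * η ^ (finrank ℝ E / q.toReal - s) := by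
  have hK : 0 ≤ K := by simpa using (hψ0 0).trans (hdecay 0 le_rfl)
  have hq1 : 1 ≤ q.toReal := by
    simpa using ENNReal.toReal_mono hq (ENNReal.HolderConjugate.one_le q p)
  obtain ⟨β, hsβ, hβq⟩ := exists_between hsq
  have hβγ : β ≤ γ := by
    have := div_le_self (Nat.cast_nonneg (finrank ℝ E)) hq1
    linarith
  set H := fun w : E ↦ min (‖w‖ ^ (-β)) (‖w‖ ^ (-γ))
  have hH : MemLp H q ν := memLp_min_norm_rpow_neg ν (ENNReal.HolderConjugate.ne_zero q p) hq
    ((lt_div_iff₀ (by linarith)).mp hβq) (by nlinarith)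
  refine ⟨|c| * (K / (β - s)) * (eLpNorm H q ν).toReal, by positivity, fun η hη μ hμ x ↦ ?_⟩
  have hF : AEStronglyMeasurable (fun y ↦ c * smallScalePart d s ψ η ‖x - y‖) ν :=
    (((measurable_smallScalePart hψ).comp (by fun_prop)).const_mul c).aestronglyMeasurable
  have hbound : ∀ᵐ y ∂ν, |c * smallScalePart d s ψ η ‖x - y‖| ≤
      |c| * (K / (β - s)) * η ^ (-s) * H (η⁻¹ • (x - y)) := by
    filter_upwards [Measure.ae_ne ν x] with y hy
    have hr : 0 < ‖x - y‖ := norm_pos_iff.mpr (sub_ne_zero.mpr hy.symm)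
    rw [abs_mul, abs_of_nonneg (smallScalePart_nonneg hψ0 _), mul_assoc, mul_assoc]
    gcongr
    rw [← mul_assoc]
    simpa only [H, norm_smul, Real.norm_of_nonneg (inv_nonneg.mpr hη.le), inv_mul_eq_div]
      using smallScalePart_le_min hψ0 hdecay hK hs hsβ hβγ hη hr
  refine (abs_integral_mul_le_of_abs_le_dilation ν hq hH hF hμ (by positivity) hη x
    hbound).trans_eq ?_
  rw [Real.rpow_sub hη, Real.rpow_neg hη.le]
  ring

theorem one_lt_of_ofReal_div_sub_lt {d s : ℝ} {p : ℝ≥0∞} (hs : 0 ≤ s) (hsd : s < d)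
    (hp : ENNReal.ofReal (d / (d - s)) < p) : 1 < p := by
  refine lt_of_le_of_lt ?_ hp
  rw [← ENNReal.ofReal_one]
  exact ENNReal.ofReal_le_ofReal ((one_le_div (by linarith)).mpr (by linarith))

theorem lt_mul_one_sub_one_div_toReal {d s : ℝ} {p : ℝ≥0∞} (hs : 0 ≤ s) (hsd : s < d)
    (hp : ENNReal.ofReal (d / (d - s)) < p) : s < d * (1 - 1 / p.toReal) := by
  rcases eq_or_ne p ∞ with rfl | hp_top
  · simpa using hsd
  have hdiv : 0 < d / (d - s) := div_pos (by linarith) (by linarith)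
  have hlt := (ENNReal.ofReal_lt_iff_lt_toReal hdiv.le hp_top).mp hp
  have hp0 : 0 < p.toReal := hdiv.trans hlt
  rw [div_lt_iff₀ (by linarith)] at hlt
  rw [mul_one_sub, ← mul_div_assoc, mul_one, lt_sub_comm, div_lt_iff₀ hp0]
  linarith

theorem small_scale_convolution_bound_general (d : ℕ) (s : ℝ) (hs : 0 ≤ s)
    (hsd : s < d)
    (ψ : ℝ → ℝ) (hψ0 : ∀ r, 0 ≤ ψ r) (hcont : Continuous ψ)
    (γ Cγ : ℝ) (hγ : (d:ℝ) < γ)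
    (hdecay : ∀ r : ℝ, 0 ≤ r → ψ r ≤ Cγ * (1 + r ^ 2) ^ (-γ / 2))
    (c : ℝ)
    (p : ℝ≥0∞) (hp : ENNReal.ofReal ((d:ℝ) / ((d:ℝ) - s)) < p) :
    ∃ C : ℝ, 0 < C ∧ ∀ η : ℝ, 0 < η →
      ∀ μ : EuclideanSpace ℝ (Fin d) → ℝ, Integrable μ → MemLp μ p →
        (∀ x, 0 ≤ μ x) →
      ∀ x : EuclideanSpace ℝ (Fin d),
        |∫ y, (c * ∫ t in Ioc (0:ℝ) η,
            t ^ ((d:ℝ) - s) * (t ^ (-(d:ℝ)) * ψ (‖x - y‖ / t)) / t) * μ y|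
          ≤ C * (eLpNorm μ p volume).toReal
              * η ^ ((d:ℝ) * (1 - 1 / p.toReal) - s) := by
  have : Nonempty (Fin d) := ⟨⟨0, by exact_mod_cast hs.trans_lt hsd⟩⟩
  have hp1 := one_lt_of_ofReal_div_sub_lt hs hsd hp
  obtain ⟨q, hpq⟩ : ∃ q, p.HolderConjugate q := ⟨_, .inv_one_sub_inv' hp1.le⟩
  have : q.HolderConjugate p := hpq.symm
  have hq : q ≠ ∞ := ((ENNReal.HolderConjugate.lt_top_iff_one_lt q p).mpr hp1).ne
  have hqD : (finrank ℝ (EuclideanSpace ℝ (Fin d)) : ℝ) / q.toReal = d * (1 - 1 / p.toReal) := by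
    rw [finrank_euclideanSpace_fin, div_eq_mul_one_div,
      ENNReal.HolderConjugate.one_div_toReal_eq (p := p)]
  obtain ⟨C, hC, hbound⟩ := abs_integral_smallScalePart_mul_le volume (p := p) hq hs
    (hqD ▸ lt_mul_one_sub_one_div_toReal hs hsd hp) (by rwa [finrank_euclideanSpace_fin]) hψ0
    hcont.measurable hdecay d c
  refine ⟨C + 1, by positivity, fun η hη μ _ hμ _ x ↦ ?_⟩
  rw [← hqD]
  exact (hbound η hη μ hμ x).trans (by gcongr; linarith)

/-- `L^∞` bound on the convolution of the small-scale part
`f_η(x) = c_{φ,d,s} ∫₀^η t^{d-s} φ_t(x) dt/t` (with radial profile `ψ`, decay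
`ψ(r) ≤ C_γ (1+r²)^{-γ/2}`, `γ > d`) with a nonnegative density `μ ∈ L¹ ∩ L^p`,
`d/(d-s) < p ≤ ∞`: `‖f_η ∗ μ‖_∞ ≤ C ‖μ‖_{L^p} η^{d(p-1)/p - s}`.  The exponent
`d(p-1)/p - s` is written as `d(1 - 1/p) - s`, which also covers `p = ∞`. -/
theorem small_scale_convolution_bound (d : ℕ) (hd : 1 ≤ d) (s : ℝ) (hs : 0 ≤ s)
    (hsd : s < d)
    (ψ : ℝ → ℝ) (hψ0 : ∀ r, 0 ≤ ψ r) (hcont : Continuous ψ)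
    (hdec : ∀ r₁ r₂ : ℝ, 0 ≤ r₁ → r₁ ≤ r₂ → ψ r₂ ≤ ψ r₁)
    (γ Cγ : ℝ) (hγ : (d:ℝ) < γ) (hCγ : 0 < Cγ)
    (hdecay : ∀ r : ℝ, 0 ≤ r → ψ r ≤ Cγ * (1 + r ^ 2) ^ (-γ / 2))
    (c : ℝ) (hc : 0 ≤ c)
    (p : ℝ≥0∞) (hp : ENNReal.ofReal ((d:ℝ) / ((d:ℝ) - s)) < p) :
    ∃ C : ℝ, 0 < C ∧ ∀ η : ℝ, 0 < η →
      ∀ μ : EuclideanSpace ℝ (Fin d) → ℝ, Integrable μ → MemLp μ p →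
        (∀ x, 0 ≤ μ x) →
      ∀ x : EuclideanSpace ℝ (Fin d),
        |∫ y, (c * ∫ t in Ioc (0:ℝ) η,
            t ^ ((d:ℝ) - s) * (t ^ (-(d:ℝ)) * ψ (‖x - y‖ / t)) / t) * μ y|
          ≤ C * (eLpNorm μ p volume).toReal
              * η ^ ((d:ℝ) * (1 - 1 / p.toReal) - s) :=
  small_scale_convolution_bound_general d s hs hsd ψ hψ0 hcont γ Cγ hγ hdecay c p hp
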